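/- Let 0 < L < R be reals with R != 2L, and let K, J be reals. Then the asymmetric second-twist expression tau2a(L, R, R1, K, 0, J, 0) (defined in the context, with k = 0) tends, as R1 tends to +infinity, to 3*(7R^2 - 16RL + 8L^2)/(512*R^2*(R - 2L)*sqrt(L*(R - L))) - L*(27R^2 - 80RL + 40L^2)*K/(768*R*(R - 2L)*(R - L)*sqrt(L*(R - L))) + L^2*(31R^2 - 72RL + 24L^2)*K^2/(1536*(R - 2L)*(R - L)^2*sqrt(L*(R - L))) - L^2*R*J/(192*(R - L)*sqrt(L*(R - L))). -/
import Mathlib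


open Filter Topology

/-- The polynomial `N(L, R0, R1)` from the asymmetric second twist coefficient formula. -/
def Npoly (L R0 R1 : ℝ) : ℝ :=
  8 * L ^ 4 * (R0 ^ 2 + R1 ^ 2)
    - 16 * L ^ 3 * (R0 ^ 3 + 2 * R0 ^ 2 * R1 + 2 * R0 * R1 ^ 2 + R1 ^ 3)
    + 8 * L ^ 2 * (R0 + R1) ^ 2 * (R0 ^ 2 + 4 * R0 * R1 + R1 ^ 2)
    - 8 * L * R0 * R1 * (2 * R0 ^ 3 + 7 * R0 ^ 2 * R1 + 7 * R0 * R1 ^ 2 + 2 * R1 ^ 3)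
    + 7 * R0 ^ 2 * R1 ^ 2 * (R0 + R1) ^ 2

/-- The polynomial `P(L, R0, R1)` from the asymmetric second twist coefficient formula. -/
def Ppoly (L R0 R1 : ℝ) : ℝ :=
  L ^ 2 * (R1 - L) ^ 4 * (48 * R0 ^ 3 * (R1 - 2 * L) + 24 * L ^ 2 * (R1 - L) ^ 2
    - 72 * L * R0 * (R1 - L) * (R1 - 2 * L)
    + R0 ^ 2 * (216 * L ^ 2 - 216 * R1 * L + 31 * R1 ^ 2))

/-- The polynomial `Q(L, R0, R1)` from the asymmetric second twist coefficient formula. -/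
def Qpoly (L R0 R1 : ℝ) : ℝ :=
  -(L ^ 2) * R0 * R1 * (32 * L ^ 2 + 17 * R0 * R1 - 32 * L * (R0 + R1))

/-- The polynomial `S(L, R0, R1)` from the asymmetric second twist coefficient formula. -/
def Spoly (L R0 R1 : ℝ) : ℝ :=
  L * (R1 - L) ^ 2 * (40 * (R1 - L) ^ 2 * L ^ 2 + 3 * R0 ^ 3 * (9 * R1 - 16 * L)
    - 80 * R0 * (2 * L ^ 2 - 3 * R1 * L + R1 ^ 2) * L
    + 3 * R0 ^ 2 * (56 * L ^ 2 - 56 * R1 * L + 9 * R1 ^ 2))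

/-- The polynomial `T(L, R0, R1)` from the asymmetric second twist coefficient formula. -/
def Tpoly (L R0 R1 : ℝ) : ℝ := L ^ 2 * R0 * (R1 - L) ^ 2

/-- The asymmetric second twist coefficient `τ₂(F², P)` (case `k = 0`, i.e.
`0 < L < min(R0, R1)`) of the squared billiard map along the elliptic period-2 orbit of
a two-arc billiard table, where `K0, K1` are the second and `J0, J1` the fourth
arclength derivatives of the radii of curvature at the bounce points. -/
noncomputable def tau2a (L R0 R1 K0 K1 J0 J1 : ℝ) : ℝ :=
  (1 / Real.sqrt (L * (R0 - L) * (R1 - L) * (R0 + R1 - L))) *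
    (3 * Npoly L R0 R1
        / (512 * R0 ^ 2 * R1 ^ 2 * (2 * (R0 - L) * (R1 - L) - R0 * R1))
      + (Ppoly L R0 R1 * K0 ^ 2 + Ppoly L R1 R0 * K1 ^ 2)
        / (1536 * (R0 - L) ^ 2 * (R1 - L) ^ 2 * (R0 + R1 - L) ^ 2
            * (2 * (R0 - L) * (R1 - L) - R0 * R1))
      + Qpoly L R0 R1 * K0 * K1
        / (768 * (R0 + R1 - L) ^ 2 * (2 * (R0 - L) * (R1 - L) - R0 * R1))
      - (Spoly L R0 R1 * R1 * K0 + Spoly L R1 R0 * R0 * K1)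
        / (768 * R0 * R1 * (R0 - L) * (R1 - L) * (R0 + R1 - L)
            * (2 * (R0 - L) * (R1 - L) - R0 * R1))
      - (Tpoly L R0 R1 * (R1 - L) * J0 + Tpoly L R1 R0 * (R0 - L) * J1)
        / (192 * (R0 - L) * (R1 - L) * (R0 + R1 - L)))

set_option maxHeartbeats 2000000 in
/-- letting the second radius of curvature tend to infinity (one flat
boundary arc) in the asymmetric second twist coefficient recovers the flat-wall
formula. -/
theorem tau2a_flat_wall_limit (L R K J : ℝ)
    (hL : 0 < L) (hLR : L < R) (hres : R ≠ 2 * L) :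
    Tendsto (fun R1 : ℝ => tau2a L R R1 K 0 J 0) atTop
      (𝓝 (3 * (7 * R ^ 2 - 16 * R * L + 8 * L ^ 2)
          / (512 * R ^ 2 * (R - 2 * L) * Real.sqrt (L * (R - L)))
        - L * (27 * R ^ 2 - 80 * R * L + 40 * L ^ 2) * K
          / (768 * R * (R - 2 * L) * (R - L) * Real.sqrt (L * (R - L)))
        + L ^ 2 * (31 * R ^ 2 - 72 * R * L + 24 * L ^ 2) * K ^ 2
          / (1536 * (R - 2 * L) * (R - L) ^ 2 * Real.sqrt (L * (R - L)))
        - L ^ 2 * R * J / (192 * (R - L) * Real.sqrt (L * (R - L))))) := by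
  have hRL : (0:ℝ) < R - L := by linarith
  have hR : (0:ℝ) < R := by linarith
  have h2L : R - 2 * L ≠ 0 := sub_ne_zero.mpr hres
  set F : ℝ → ℝ := fun u =>
    (1 / Real.sqrt (L * (R - L) * ((1 - L * u) * (1 + (R - L) * u)))) *
      (3 * (8 * L ^ 4 * (R ^ 2 * u ^ 4 + u ^ 2)
            - 16 * L ^ 3 * (R ^ 3 * u ^ 4 + 2 * R ^ 2 * u ^ 3 + 2 * R * u ^ 2 + u)
            + 8 * L ^ 2 * (R * u + 1) ^ 2 * (R ^ 2 * u ^ 2 + 4 * R * u + 1)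
            - 8 * L * R * (2 * R ^ 3 * u ^ 3 + 7 * R ^ 2 * u ^ 2 + 7 * R * u + 2)
            + 7 * R ^ 2 * (R * u + 1) ^ 2)
          / (512 * R ^ 2 * ((R - 2 * L) - 2 * L * (R - L) * u))
        + K ^ 2 * L ^ 2 * (1 - L * u) ^ 2 *
            (48 * R ^ 3 * u * (1 - 2 * L * u) + 24 * L ^ 2 * (1 - L * u) ^ 2
              - 72 * L * R * (1 - L * u) * (1 - 2 * L * u)
              + R ^ 2 * (216 * L ^ 2 * u ^ 2 - 216 * L * u + 31))
          / (1536 * (R - L) ^ 2 * (1 + (R - L) * u) ^ 2 * ((R - 2 * L) - 2 * L * (R - L) * u))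
        - K * L * (1 - L * u) *
            (40 * L ^ 2 * (1 - L * u) ^ 2 + 3 * R ^ 3 * (9 - 16 * L * u) * u
              - 80 * R * L * (2 * L ^ 2 * u ^ 2 - 3 * L * u + 1)
              + 3 * R ^ 2 * (56 * L ^ 2 * u ^ 2 - 56 * L * u + 9))
          / (768 * R * (R - L) * (1 + (R - L) * u) * ((R - 2 * L) - 2 * L * (R - L) * u))
        - J * L ^ 2 * R * (1 - L * u) ^ 2 / (192 * (R - L) * (1 + (R - L) * u))) with hF
  have hsL : (0:ℝ) < L * (R - L) := mul_pos hL hRL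
  have hcont : ContinuousAt F 0 := by
    rw [hF]
    apply ContinuousAt.mul
    · apply ContinuousAt.div continuousAt_const
      · exact Real.continuous_sqrt.continuousAt.comp (by fun_prop)
      · have : L * (R - L) * ((1 - L * 0) * (1 + (R - L) * 0)) = L * (R - L) := by ring
        rw [this]
        exact ne_of_gt (Real.sqrt_pos.mpr hsL)
    · apply ContinuousAt.sub
      apply ContinuousAt.sub
      apply ContinuousAt.add
      · apply ContinuousAt.div (by fun_prop) (by fun_prop)
        have : (512 * R ^ 2 * ((R - 2 * L) - 2 * L * (R - L) * 0)) = 512 * R ^ 2 * (R - 2 * L) := by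
          ring
        rw [this]
        exact mul_ne_zero (by positivity) h2L
      · apply ContinuousAt.div (by fun_prop) (by fun_prop)
        have : (1536 * (R - L) ^ 2 * (1 + (R - L) * 0) ^ 2 * ((R - 2 * L) - 2 * L * (R - L) * 0))
            = 1536 * (R - L) ^ 2 * (R - 2 * L) := by ring
        rw [this]
        exact mul_ne_zero (by positivity) h2L
      · apply ContinuousAt.div (by fun_prop) (by fun_prop)
        have : (768 * R * (R - L) * (1 + (R - L) * 0) * ((R - 2 * L) - 2 * L * (R - L) * 0))
            = 768 * R * (R - L) * (R - 2 * L) := by ring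
        rw [this]
        exact mul_ne_zero (by positivity) h2L
      · apply ContinuousAt.div (by fun_prop) (by fun_prop)
        have : (192 * (R - L) * (1 + (R - L) * 0)) = 192 * (R - L) := by ring
        rw [this]
        positivity
  have hF0 : F 0 = 3 * (7 * R ^ 2 - 16 * R * L + 8 * L ^ 2)
          / (512 * R ^ 2 * (R - 2 * L) * Real.sqrt (L * (R - L)))
        - L * (27 * R ^ 2 - 80 * R * L + 40 * L ^ 2) * K
          / (768 * R * (R - 2 * L) * (R - L) * Real.sqrt (L * (R - L)))
        + L ^ 2 * (31 * R ^ 2 - 72 * R * L + 24 * L ^ 2) * K ^ 2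
          / (1536 * (R - 2 * L) * (R - L) ^ 2 * Real.sqrt (L * (R - L)))
        - L ^ 2 * R * J / (192 * (R - L) * Real.sqrt (L * (R - L))) := by
    rw [hF]
    have hs : Real.sqrt (L * (R - L)) ≠ 0 := ne_of_gt (Real.sqrt_pos.mpr hsL)
    have harg : L * (R - L) * ((1 - L * 0) * (1 + (R - L) * 0)) = L * (R - L) := by ring
    simp only [harg]
    field_simp
    ring
  have hM : ∀ᶠ R1 : ℝ in atTop,
      F (1 / R1) = tau2a L R R1 K 0 J 0 := by
    filter_upwards [eventually_ge_atTop (max (L + 1) (2 * L * (R - L) / |R - 2 * L| + 1))]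
      with R1 hR1
    have hR1L1 : L + 1 ≤ R1 := le_trans (le_max_left _ _) hR1
    have hR1b : 2 * L * (R - L) / |R - 2 * L| + 1 ≤ R1 := le_trans (le_max_right _ _) hR1
    have hR1pos : (0:ℝ) < R1 := by linarith
    have hR1L : (0:ℝ) < R1 - L := by linarith
    have hRR1L : (0:ℝ) < R + R1 - L := by linarith
    have habs : (0:ℝ) < |R - 2 * L| := abs_pos.mpr h2L
    have hG : 2 * (R - L) * (R1 - L) - R * R1 ≠ 0 := by
      intro h
      have h' : (R - 2 * L) * R1 = 2 * L * (R - L) := by linear_combination h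
      have h1 : |R - 2 * L| * R1 = 2 * L * (R - L) := by
        rw [← abs_of_pos hR1pos, ← abs_mul, h', abs_of_nonneg (by nlinarith)]
      have h2 : 2 * L * (R - L) / |R - 2 * L| * |R - 2 * L| = 2 * L * (R - L) :=
        div_mul_cancel₀ _ (ne_of_gt habs)
      nlinarith [mul_le_mul_of_nonneg_left hR1b (le_of_lt habs)]
    have hGu : (R - 2 * L) - 2 * L * (R - L) * (1 / R1) ≠ 0 := by
      intro h0
      apply hG
      have : ((R - 2 * L) - 2 * L * (R - L) * (1 / R1)) * R1
          = 2 * (R - L) * (R1 - L) - R * R1 := by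
        field_simp
        ring
      rw [← this, h0, zero_mul]
    have h1u : (0:ℝ) < 1 - L * (1 / R1) := by
      have : L * (1 / R1) < 1 := by
        rw [mul_one_div, div_lt_one hR1pos]; linarith
      linarith
    have h2u : (0:ℝ) < 1 + (R - L) * (1 / R1) := by positivity
    have hΔpos : (0:ℝ) < L * (R - L) * (R1 - L) * (R + R1 - L) :=
      mul_pos (mul_pos hsL hR1L) hRR1L
    have hsq : Real.sqrt (L * (R - L) * ((1 - L * (1 / R1)) * (1 + (R - L) * (1 / R1))))
        = Real.sqrt (L * (R - L) * (R1 - L) * (R + R1 - L)) * (1 / R1) := by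
      rw [show L * (R - L) * ((1 - L * (1 / R1)) * (1 + (R - L) * (1 / R1)))
          = (L * (R - L) * (R1 - L) * (R + R1 - L)) * (1 / R1) ^ 2 by
        field_simp; ring]
      rw [Real.sqrt_mul hΔpos.le, Real.sqrt_sq (by positivity)]
    have hsne : Real.sqrt (L * (R - L) * (R1 - L) * (R + R1 - L)) ≠ 0 :=
      ne_of_gt (Real.sqrt_pos.mpr hΔpos)
    have e1 : R1 * (3 * (8 * L ^ 4 * (R ^ 2 * (1 / R1) ^ 4 + (1 / R1) ^ 2)
            - 16 * L ^ 3 * (R ^ 3 * (1 / R1) ^ 4 + 2 * R ^ 2 * (1 / R1) ^ 3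
                + 2 * R * (1 / R1) ^ 2 + 1 / R1)
            + 8 * L ^ 2 * (R * (1 / R1) + 1) ^ 2 * (R ^ 2 * (1 / R1) ^ 2 + 4 * R * (1 / R1) + 1)
            - 8 * L * R * (2 * R ^ 3 * (1 / R1) ^ 3 + 7 * R ^ 2 * (1 / R1) ^ 2
                + 7 * R * (1 / R1) + 2)
            + 7 * R ^ 2 * (R * (1 / R1) + 1) ^ 2)
          / (512 * R ^ 2 * ((R - 2 * L) - 2 * L * (R - L) * (1 / R1))))
        = 3 * (8 * L ^ 4 * (R ^ 2 + R1 ^ 2)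
            - 16 * L ^ 3 * (R ^ 3 + 2 * R ^ 2 * R1 + 2 * R * R1 ^ 2 + R1 ^ 3)
            + 8 * L ^ 2 * (R + R1) ^ 2 * (R ^ 2 + 4 * R * R1 + R1 ^ 2)
            - 8 * L * R * R1 * (2 * R ^ 3 + 7 * R ^ 2 * R1 + 7 * R * R1 ^ 2 + 2 * R1 ^ 3)
            + 7 * R ^ 2 * R1 ^ 2 * (R + R1) ^ 2)
          / (512 * R ^ 2 * R1 ^ 2 * (2 * (R - L) * (R1 - L) - R * R1)) := by
      rw [← mul_div_assoc, div_eq_div_iff (mul_ne_zero (by positivity) hGu)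
        (mul_ne_zero (by positivity) hG)]
      field_simp
      ring
    have e2 : R1 * (K ^ 2 * L ^ 2 * (1 - L * (1 / R1)) ^ 2 *
            (48 * R ^ 3 * (1 / R1) * (1 - 2 * L * (1 / R1))
              + 24 * L ^ 2 * (1 - L * (1 / R1)) ^ 2
              - 72 * L * R * (1 - L * (1 / R1)) * (1 - 2 * L * (1 / R1))
              + R ^ 2 * (216 * L ^ 2 * (1 / R1) ^ 2 - 216 * L * (1 / R1) + 31))
          / (1536 * (R - L) ^ 2 * (1 + (R - L) * (1 / R1)) ^ 2
              * ((R - 2 * L) - 2 * L * (R - L) * (1 / R1))))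
        = (L ^ 2 * (R1 - L) ^ 4 * (48 * R ^ 3 * (R1 - 2 * L) + 24 * L ^ 2 * (R1 - L) ^ 2
              - 72 * L * R * (R1 - L) * (R1 - 2 * L)
              + R ^ 2 * (216 * L ^ 2 - 216 * R1 * L + 31 * R1 ^ 2)) * K ^ 2
            + L ^ 2 * (R - L) ^ 4 * (48 * R1 ^ 3 * (R - 2 * L) + 24 * L ^ 2 * (R - L) ^ 2
              - 72 * L * R1 * (R - L) * (R - 2 * L)
              + R1 ^ 2 * (216 * L ^ 2 - 216 * R * L + 31 * R ^ 2)) * 0 ^ 2)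
          / (1536 * (R - L) ^ 2 * (R1 - L) ^ 2 * (R + R1 - L) ^ 2
              * (2 * (R - L) * (R1 - L) - R * R1)) := by
      rw [← mul_div_assoc, div_eq_div_iff (mul_ne_zero (by positivity) hGu)
        (mul_ne_zero (by positivity) hG)]
      field_simp
      ring
    have e3 : R1 * (K * L * (1 - L * (1 / R1)) *
            (40 * L ^ 2 * (1 - L * (1 / R1)) ^ 2 + 3 * R ^ 3 * (9 - 16 * L * (1 / R1)) * (1 / R1)
              - 80 * R * L * (2 * L ^ 2 * (1 / R1) ^ 2 - 3 * L * (1 / R1) + 1)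
              + 3 * R ^ 2 * (56 * L ^ 2 * (1 / R1) ^ 2 - 56 * L * (1 / R1) + 9))
          / (768 * R * (R - L) * (1 + (R - L) * (1 / R1))
              * ((R - 2 * L) - 2 * L * (R - L) * (1 / R1))))
        = (L * (R1 - L) ^ 2 * (40 * (R1 - L) ^ 2 * L ^ 2 + 3 * R ^ 3 * (9 * R1 - 16 * L)
              - 80 * R * (2 * L ^ 2 - 3 * R1 * L + R1 ^ 2) * L
              + 3 * R ^ 2 * (56 * L ^ 2 - 56 * R1 * L + 9 * R1 ^ 2)) * R1 * K
            + L * (R - L) ^ 2 * (40 * (R - L) ^ 2 * L ^ 2 + 3 * R1 ^ 3 * (9 * R - 16 * L)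
              - 80 * R1 * (2 * L ^ 2 - 3 * R * L + R ^ 2) * L
              + 3 * R1 ^ 2 * (56 * L ^ 2 - 56 * R * L + 9 * R ^ 2)) * R * 0)
          / (768 * R * R1 * (R - L) * (R1 - L) * (R + R1 - L)
              * (2 * (R - L) * (R1 - L) - R * R1)) := by
      rw [← mul_div_assoc, div_eq_div_iff (mul_ne_zero (by positivity) hGu)
        (mul_ne_zero (by positivity) hG)]
      field_simp
      ring
    have e4 : R1 * (J * L ^ 2 * R * (1 - L * (1 / R1)) ^ 2
          / (192 * (R - L) * (1 + (R - L) * (1 / R1))))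
        = (L ^ 2 * R * (R1 - L) ^ 2 * (R1 - L) * J + L ^ 2 * R1 * (R - L) ^ 2 * (R - L) * 0)
          / (192 * (R - L) * (R1 - L) * (R + R1 - L)) := by
      rw [← mul_div_assoc, div_eq_div_iff (by positivity) (by positivity)]
      field_simp
      ring
    simp only [hF]
    simp only [tau2a, Npoly, Ppoly, Qpoly, Spoly, Tpoly]
    rw [hsq]
    rw [show 1 / (Real.sqrt (L * (R - L) * (R1 - L) * (R + R1 - L)) * (1 / R1))
        = 1 / Real.sqrt (L * (R - L) * (R1 - L) * (R + R1 - L)) * R1 by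
      rw [one_div, mul_inv, ← one_div, one_div R1, inv_inv]]
    rw [mul_assoc]
    congr 1
    rw [mul_sub, mul_sub, mul_add, e1, e2, e3, e4]
    ring
  have h1 : Tendsto (fun R1 : ℝ => 1 / R1) atTop (𝓝 (0:ℝ)) := by
    simpa [one_div] using tendsto_inv_atTop_zero
  have h2 : Tendsto (fun R1 : ℝ => F (1 / R1)) atTop (𝓝 (F 0)) :=
    hcont.tendsto.comp h1
  rw [hF0] at h2
  exact h2.congr' hM
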